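/- Let S be a (k−1)-element subset of {1,…,n} and let R = {r_1, r_2, r_3} be a 3-element subset of {1,…,n} disjoint from S. Then J(S∪{r_1,r_2}, S∪{r_2,r_3}) · J(S∪{r_2,r_3}, S∪{r_1,r_3}) · J(S∪{r_1,r_3}, S∪{r_1,r_2}) = −1. -/

import Mathlib

/-- The entry of the boundary matrix `I_{n,k}`: for a `k`-element subset `Y` and a
`(k+1)`-element subset `X = {x_0 < x_1 < ⋯ < x_k}` of `Fin n`, the entry is `(-1)^i` if
`Y = X \ {x_i}`, and `0` otherwise. -/
noncomputable def Ient (n k : ℕ) (Y X : Finset (Fin n)) : ℝ :=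
  if Y ⊆ X ∧ Y.card = k ∧ X.card = k + 1 then
    (-1 : ℝ) ^ (X.filter (fun a => ∀ b ∈ X \ Y, a < b)).card
  else 0

/-- `J(X,Y) = I_{n,k}(X ∩ Y, X) · I_{n,k}(X ∩ Y, Y)` for `(k+1)`-element subsets `X, Y`
with `|X ∩ Y| = k`. -/
noncomputable def Jfun (n k : ℕ) (X Y : Finset (Fin n)) : ℝ :=
  Ient n k (X ∩ Y) X * Ient n k (X ∩ Y) Y

/-!
With `U = X ∩ Y` of size `k`, both `I(U, U ∪ {a})` and `I(U, U ∪ {c})` are signs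
`(-1)^#{x ∈ U | x < ·}`, so each factor `J` is `(-1)` to a sum of two such counts.
In the cyclic product the six counts pair up as `#{x ∈ S ∪ {a} | x < b} + #{x ∈ S ∪ {b} | x < a}`
for the three pairs `{a, b} ⊆ R`; each pair contributes the two `S`-counts plus exactly one
(from whichever of `a < b`, `b < a` holds), so the total exponent is `2·(…) + 3`, which is odd.
-/

open Finset

section

variable {α : Type*} [LinearOrder α]

lemma card_filter_lt_insert_add_card_filter_lt_insert {S : Finset α} {a b : α}
    (ha : a ∉ S) (hb : b ∉ S) (hab : a ≠ b) :
    #{x ∈ insert a S | x < b} + #{x ∈ insert b S | x < a} =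
      #{x ∈ S | x < b} + #{x ∈ S | x < a} + 1 := by
  rw [filter_insert, filter_insert]
  rcases hab.lt_or_gt with h | h
  · rw [if_pos h, if_neg h.not_gt, card_insert_of_notMem (by simp [ha])]
    ring
  · rw [if_neg h.not_gt, if_pos h, card_insert_of_notMem (by simp [hb])]
    ring

end

section

variable {n k : ℕ}

lemma Ient_insert {U : Finset (Fin n)} {b : Fin n} (hb : b ∉ U) (hU : #U = k) :
    Ient n k U (insert b U) = (-1) ^ #{x ∈ U | x < b} := by
  rw [Ient, if_pos ⟨subset_insert b U, hU, by rw [card_insert_of_notMem hb, hU]⟩,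
    insert_sdiff_cancel hb]
  simp only [mem_singleton, forall_eq, filter_insert, lt_irrefl, if_false]

lemma Jfun_insert_insert {U : Finset (Fin n)} {a c : Fin n} (hU : #U = k)
    (ha : a ∉ U) (hc : c ∉ U) (hac : a ≠ c) :
    Jfun n k (insert a U) (insert c U) = (-1) ^ (#{x ∈ U | x < a} + #{x ∈ U | x < c}) := by
  have hinter : insert a U ∩ insert c U = U := by
    rw [insert_inter_of_notMem (by simp [hac, ha]), inter_insert_of_notMem hc, inter_self]
  rw [Jfun, hinter, Ient_insert ha hU, Ient_insert hc hU, pow_add]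

lemma Jfun_union_pair {S : Finset (Fin n)} {a b c : Fin n} (hS : #(insert b S) = k)
    (ha : a ∉ insert b S) (hc : c ∉ insert b S) (hac : a ≠ c) :
    Jfun n k (S ∪ {a, b}) (S ∪ {b, c}) =
      (-1) ^ (#{x ∈ insert b S | x < a} + #{x ∈ insert b S | x < c}) := by
  rw [pair_comm b c, union_insert, union_insert, union_singleton]
  exact Jfun_insert_insert hS ha hc hac

end

theorem stmt2_general (n k : ℕ) (hk : 1 ≤ k)
    (S : Finset (Fin n)) (hS : S.card = k - 1)
    (r₁ r₂ r₃ : Fin n) (h12 : r₁ ≠ r₂) (h13 : r₁ ≠ r₃) (h23 : r₂ ≠ r₃)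
    (hdisj : Disjoint S ({r₁, r₂, r₃} : Finset (Fin n))) :
    Jfun n k (S ∪ {r₁, r₂}) (S ∪ {r₂, r₃}) *
      Jfun n k (S ∪ {r₂, r₃}) (S ∪ {r₁, r₃}) *
      Jfun n k (S ∪ {r₁, r₃}) (S ∪ {r₁, r₂}) = -1 := by
  simp only [disjoint_insert_right, disjoint_singleton_right] at hdisj
  obtain ⟨h1, h2, h3⟩ := hdisj
  have hcard {r : Fin n} (hr : r ∉ S) : #(insert r S) = k := by
    rw [card_insert_of_notMem hr, hS]; omega
  rw [Jfun_union_pair (hcard h2) (by simp [h12, h1]) (by simp [h23.symm, h3]) h13,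
    pair_comm r₁ r₃,
    Jfun_union_pair (hcard h3) (by simp [h23, h2]) (by simp [h13, h1]) h12.symm,
    Jfun_union_pair (hcard h1) (by simp [h13.symm, h3]) (by simp [h12.symm, h2]) h23.symm,
    ← pow_add, ← pow_add]
  have e12 := card_filter_lt_insert_add_card_filter_lt_insert h1 h2 h12
  have e13 := card_filter_lt_insert_add_card_filter_lt_insert h1 h3 h13
  have e23 := card_filter_lt_insert_add_card_filter_lt_insert h2 h3 h23
  exact Odd.neg_one_pow ⟨#{x ∈ S | x < r₁} + #{x ∈ S | x < r₂} + #{x ∈ S | x < r₃} + 1, by omega⟩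

/-- For a `(k-1)`-element subset `S` and a disjoint `3`-element subset `{r₁, r₂, r₃}` of
`{1,…,n}`, we have
`J(S∪{r₁,r₂}, S∪{r₂,r₃}) · J(S∪{r₂,r₃}, S∪{r₁,r₃}) · J(S∪{r₁,r₃}, S∪{r₁,r₂}) = -1`. -/
theorem stmt2 (n k : ℕ) (hk : 1 ≤ k) (hkn : k < n)
    (S : Finset (Fin n)) (hS : S.card = k - 1)
    (r₁ r₂ r₃ : Fin n) (h12 : r₁ ≠ r₂) (h13 : r₁ ≠ r₃) (h23 : r₂ ≠ r₃)
    (hdisj : Disjoint S ({r₁, r₂, r₃} : Finset (Fin n))) :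
    Jfun n k (S ∪ {r₁, r₂}) (S ∪ {r₂, r₃}) *
      Jfun n k (S ∪ {r₂, r₃}) (S ∪ {r₁, r₃}) *
      Jfun n k (S ∪ {r₁, r₃}) (S ∪ {r₁, r₂}) = -1 :=
  stmt2_general n k hk S hS r₁ r₂ r₃ h12 h13 h23 hdisj
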